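/- Let D ⊆ ℝⁿ be compact, F₀, F₁ : D → ℝ continuous, w : D × (0,ε₀] → ℝ bounded, C₁ < 0 and κ ∈ (0,1). Suppose F₀(x) ≤ 0 on D and F₁(x) ≤ 0 whenever F₀(x) = 0. Then there exists ε* > 0 such that for all 0 < ε ≤ ε*, F₀(x) + ε F₁(x) + ε(1−κ)C₁ + ε² w(x,ε) ≤ 0 for all x ∈ D. -/
import Mathlib


theorem small_feedback_core_inequality {n : ℕ}
    (D : Set (EuclideanSpace ℝ (Fin n))) (hD : IsCompact D)
    (F₀ F₁ : EuclideanSpace ℝ (Fin n) → ℝ)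
    (w : EuclideanSpace ℝ (Fin n) → ℝ → ℝ)
    (ε₀ : ℝ) (hε₀ : 0 < ε₀)
    (C₁ : ℝ) (hC₁ : C₁ < 0) (κ : ℝ) (hκ : κ ∈ Set.Ioo (0:ℝ) 1)
    (hF₀ : ContinuousOn F₀ D) (hF₁ : ContinuousOn F₁ D)
    (hw : ∃ M : ℝ, ∀ x ∈ D, ∀ ε ∈ Set.Ioc (0:ℝ) ε₀, |w x ε| ≤ M)
    (hF₀neg : ∀ x ∈ D, F₀ x ≤ 0)
    (hF₁neg : ∀ x ∈ D, F₀ x = 0 → F₁ x ≤ 0) :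
    ∃ εstar : ℝ, 0 < εstar ∧ εstar ≤ ε₀ ∧
      ∀ ε : ℝ, 0 < ε → ε ≤ εstar → ∀ x ∈ D,
        F₀ x + ε * F₁ x + ε * (1 - κ) * C₁ + ε ^ 2 * w x ε ≤ 0 := by
  obtain ⟨hκ0, hκ1⟩ := hκ
  obtain ⟨M₀, hM₀⟩ := hw
  set M : ℝ := max M₀ 0 with hMdef
  have hM0 : 0 ≤ M := le_max_right _ _
  have hM : ∀ x ∈ D, ∀ ε ∈ Set.Ioc (0:ℝ) ε₀, |w x ε| ≤ M := fun x hx ε hε =>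
    (hM₀ x hx ε hε).trans (le_max_left _ _)
  obtain ⟨B₀, hB₀⟩ := hD.exists_bound_of_continuousOn hF₁
  set B : ℝ := max B₀ 0 with hBdef
  have hB0 : 0 ≤ B := le_max_right _ _
  have hB : ∀ x ∈ D, F₁ x ≤ B := fun x hx =>
    (le_abs_self _).trans ((hB₀ x hx).trans (le_max_left _ _))
  set m : ℝ := (1 - κ) * (-C₁) / 2 with hmdef
  have hm : 0 < m := by
    have h1 : 0 < 1 - κ := by linarith
    have h2 : 0 < -C₁ := by linarith
    have := mul_pos h1 h2
    rw [hmdef]; linarith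
  -- the "bad" set K where F₁ is not very negative
  set K : Set (EuclideanSpace ℝ (Fin n)) := D ∩ F₁ ⁻¹' Set.Ici m with hKdef
  have hKsub : K ⊆ D := Set.inter_subset_left
  have hKclosed : IsClosed K :=
    hF₁.preimage_isClosed_of_isClosed hD.isClosed isClosed_Ici
  have hKc : IsCompact K := hD.of_isClosed_subset hKclosed hKsub
  have hδ : ∃ δ : ℝ, 0 < δ ∧ ∀ x ∈ K, F₀ x ≤ -δ := by
    rcases Set.eq_empty_or_nonempty K with hKe | hKne
    · exact ⟨1, one_pos, by simp [hKe]⟩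
    · obtain ⟨x₀, hx₀K, hmax⟩ := hKc.exists_isMaxOn hKne (hF₀.mono hKsub)
      have hx₀D : x₀ ∈ D := hKsub hx₀K
      have hx₀neg : F₀ x₀ < 0 := by
        rcases lt_or_eq_of_le (hF₀neg x₀ hx₀D) with h | h
        · exact h
        · exfalso
          have h1 : F₁ x₀ ≤ 0 := hF₁neg x₀ hx₀D h
          have h2 : m ≤ F₁ x₀ := hx₀K.2
          linarith
      refine ⟨-F₀ x₀, by linarith, fun x hx => ?_⟩
      have := hmax hx
      simpa using this
  obtain ⟨δ, hδpos, hδK⟩ := hδ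
  refine ⟨min ε₀ (min (δ / (B + ε₀ * M + 1)) (m / (M + 1))),
    lt_min hε₀ (lt_min (by positivity) (by positivity)),
    min_le_left _ _, ?_⟩
  intro ε hε hεle x hx
  have hεε₀ : ε ≤ ε₀ := hεle.trans (min_le_left _ _)
  have hε1 : ε ≤ δ / (B + ε₀ * M + 1) :=
    hεle.trans ((min_le_right _ _).trans (min_le_left _ _))
  have hε2 : ε ≤ m / (M + 1) :=
    hεle.trans ((min_le_right _ _).trans (min_le_right _ _))
  have hden1 : (0:ℝ) < B + ε₀ * M + 1 := by positivity
  have hε1' : ε * (B + ε₀ * M + 1) ≤ δ := by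
    rw [← le_div_iff₀ hden1]; exact hε1
  have hε2' : ε * (M + 1) ≤ m := by
    rw [← le_div_iff₀ (by positivity : (0:ℝ) < M + 1)]; exact hε2
  have hwle : w x ε ≤ M := (le_abs_self _).trans (hM x hx ε ⟨hε, hεε₀⟩)
  by_cases hxK : m ≤ F₁ x
  · -- x ∈ K : F₀ is uniformly negative there
    have hF0x : F₀ x ≤ -δ := hδK x ⟨hx, hxK⟩
    have hF1x : F₁ x ≤ B := hB x hx
    have hC : ε * (1 - κ) * C₁ ≤ 0 := by
      have : 0 < 1 - κ := by linarith
      nlinarith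
    nlinarith [mul_le_mul_of_nonneg_left hwle (sq_nonneg ε),
      mul_le_mul_of_nonneg_left hF1x hε.le,
      mul_le_mul_of_nonneg_left hεε₀ (mul_nonneg hε.le hM0)]
  · push_neg at hxK
    have hF0x : F₀ x ≤ 0 := hF₀neg x hx
    have h2m : ε * (1 - κ) * C₁ = -2 * ε * m := by
      rw [hmdef]; ring
    nlinarith [mul_le_mul_of_nonneg_left hwle (sq_nonneg ε),
      mul_le_mul_of_nonneg_left hxK.le hε.le,
      mul_le_mul_of_nonneg_left hε2' hε.le]
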